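/- In a valid modular DRUP proof π (without deletions), for every forward clause cls ∈ L_F(π), the main module's clauses together with the forward clauses copied before cls entail all backward clauses copied before cls: Φ_m ∧ L_F(π^{id(cls)}) ⊨ L_B(π^{id(cls)}). -/

import Mathlib

/-- Propositional variables. -/
abbrev Var := ℕ
/-- A literal is a variable together with a polarity. -/
abbrev Lit := Var × Bool
/-- A clause is a finite set of literals. -/
abbrev Clause := Finset Lit
/-- A total truth assignment. -/
abbrev Assignment := Var → Bool

/-- Negation of a literal. -/
def Lit.neg (l : Lit) : Lit := (l.1, !l.2)

/-- An assignment satisfies a literal. -/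
def satLit (σ : Assignment) (l : Lit) : Prop := σ l.1 = l.2
/-- An assignment satisfies a clause (some literal is true). -/
def satClause (σ : Assignment) (C : Clause) : Prop := ∃ l ∈ C, satLit σ l
/-- An assignment satisfies a set of clauses. -/
def satSet (σ : Assignment) (Γ : Set Clause) : Prop := ∀ C ∈ Γ, satClause σ C
/-- Semantic consequence: every model of Γ satisfies C. -/
def entails (Γ : Set Clause) (C : Clause) : Prop :=
  ∀ σ : Assignment, satSet σ Γ → satClause σ C

/-- Unit-propagation closure: the least set of literals containing the
assumptions `A` and closed under the unit-propagation rule for clauses of `Γ`: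
if all literals of a clause but one are falsified (their negations derived),
the remaining literal is derived. -/
inductive UPC (Γ : Set Clause) (A : Set Lit) : Lit → Prop
  | assm {l : Lit} : l ∈ A → UPC Γ A l
  | prop {C : Clause} {l : Lit} : C ∈ Γ → l ∈ C →
      (∀ l' ∈ C, l' ≠ l → UPC Γ A (Lit.neg l')) → UPC Γ A l

/-- Unit propagation from `Γ` under assumptions `A` reaches a conflict:
some clause of `Γ` has all its literals falsified by the closure. -/
def upConflict (Γ : Set Clause) (A : Set Lit) : Prop :=
  ∃ C ∈ Γ, ∀ l ∈ C, UPC Γ A (Lit.neg l)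

/-- `RUP Γ C` (written `Γ ⊢_UP C`): unit propagation from `Γ` together with the
negations of the literals of `C` reaches a conflict. -/
def RUP (Γ : Set Clause) (C : Clause) : Prop :=
  upConflict Γ {l | ∃ m ∈ C, l = Lit.neg m}

/-- The two modules: secondary `s` and main `m`. -/
inductive ModIdx | s | m
deriving DecidableEq

/-- A step of a modular DRUP proof. -/
inductive MStep
  | asserted (idx : ModIdx) (c : Clause)
  | rup (idx : ModIdx) (c : Clause)
  | cp (src dst : ModIdx) (c : Clause)
  | del (idx : ModIdx) (c : Clause)
deriving DecidableEq

/-- A step adds clause `c` to module `idx` (by assertion, rup, or copy into `idx`). -/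
def MStep.addsTo : MStep → ModIdx → Clause → Prop
  | .asserted i c, j, d => i = j ∧ c = d
  | .rup i c, j, d => i = j ∧ c = d
  | .cp _ i c, j, d => i = j ∧ c = d
  | .del _ _, _, _ => False

/-- Active clauses of module `idx`: added to `idx` and not later deleted from `idx`. -/
def mactive (π : List MStep) (idx : ModIdx) : Set Clause :=
  {c | ∃ i, ∃ hi : i < π.length, (π[i]'hi).addsTo idx c ∧
      ∀ k, ∀ hk : k < π.length, i < k → (π[k]'hk) ≠ MStep.del idx c}

/-- All clauses asserted into module `idx`. -/
def allasserted (π : List MStep) (idx : ModIdx) : Set Clause :=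
  {c | MStep.asserted idx c ∈ π}

/-- Validity of a modular DRUP proof: every rup step is RUP w.r.t. the active
clauses of its module, every copy step's clause is RUP in its source module,
and the final step adds ⊥ to module `m` (by rup or by copy from `s`). -/
def validModular (π : List MStep) : Prop :=
  (∀ i, ∀ hi : i < π.length, ∀ idx c,
      (π[i]'hi) = MStep.rup idx c → RUP (mactive (π.take i) idx) c) ∧
  (∀ i, ∀ hi : i < π.length, ∀ src dst c,
      (π[i]'hi) = MStep.cp src dst c → RUP (mactive (π.take i) src) c) ∧
  ∃ hne : π ≠ [],
    π.getLast hne = MStep.rup ModIdx.m ∅ ∨ π.getLast hne = MStep.cp ModIdx.s ModIdx.m ∅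

/-- The proof contains no deletion steps. -/
def noDel (π : List MStep) : Prop := ∀ st ∈ π, ∀ idx c, st ≠ MStep.del idx c

/-- Backward clauses of a prefix: clauses copied from `m` to `s`. -/
def LB (π : List MStep) : Set Clause := {c | MStep.cp ModIdx.m ModIdx.s c ∈ π}
/-- Forward clauses of a prefix: clauses copied from `s` to `m`. -/
def LF (π : List MStep) : Set Clause := {c | MStep.cp ModIdx.s ModIdx.m c ∈ π}

/-- `i` is the position of the first copy step from `s` to `m` for clause `c`. -/
def firstCpF (π : List MStep) (c : Clause) (i : ℕ) : Prop :=
  ∃ hi : i < π.length, (π[i]'hi) = MStep.cp ModIdx.s ModIdx.m c ∧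
    ∀ j, ∀ hj : j < π.length, j < i → (π[j]'hj) ≠ MStep.cp ModIdx.s ModIdx.m c

/-!
Every clause of the main module is a consequence of `Φm` and the forward clauses
copied so far: asserted clauses lie in `Φm`, forward copies lie in `L_F`, and a
clause derived by unit propagation is entailed by the earlier clauses of its module,
because unit propagation is sound. Deletions only shrink the active clauses, so it
suffices to treat every clause ever added to the main module. A backward clause is
RUP in the main module at the moment it is copied, so it too follows from `Φm` and
the forward clauses copied before it.
-/

lemma satLit_neg (σ : Assignment) (l : Lit) : satLit σ (Lit.neg l) ↔ ¬ satLit σ l := by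
  simp [satLit, Lit.neg, Bool.eq_not_iff]

lemma UPC.sound {Γ : Set Clause} {A : Set Lit} {σ : Assignment} {l : Lit}
    (hΓ : satSet σ Γ) (hA : ∀ a ∈ A, satLit σ a) (h : UPC Γ A l) : satLit σ l := by
  induction h with
  | assm hl => exact hA _ hl
  | @prop C l hC hl _ ih =>
    obtain ⟨l', hl', hsat⟩ := hΓ C hC
    by_cases he : l' = l
    · exact he ▸ hsat
    · exact absurd hsat ((satLit_neg σ l').1 (ih l' hl' he))

lemma RUP.entails {Γ : Set Clause} {C : Clause} (h : RUP Γ C) : entails Γ C := by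
  intro σ hσ
  by_contra hC
  obtain ⟨D, hD, hfalsified⟩ := h
  have hA : ∀ a ∈ {l | ∃ m ∈ C, l = Lit.neg m}, satLit σ a := by
    rintro _ ⟨m, hm, rfl⟩
    exact (satLit_neg σ m).2 fun hsat => hC ⟨m, hm, hsat⟩
  obtain ⟨l, hl, hsat⟩ := hσ D hD
  exact (satLit_neg σ l).1 ((hfalsified l hl).sound hσ hA) hsat

lemma entails.mono {Γ Δ : Set Clause} {C : Clause} (h : entails Γ C) (hΓΔ : Γ ⊆ Δ) :
    entails Δ C :=
  fun σ hσ => h σ fun D hD => hσ D (hΓΔ hD)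

lemma entails.trans {Γ Δ : Set Clause} {C : Clause} (h : entails Γ C)
    (hΓ : ∀ D ∈ Γ, entails Δ D) : entails Δ C :=
  fun σ hσ => h σ fun D hD => hΓ D hD σ hσ

lemma entails_of_mem {Γ : Set Clause} {C : Clause} (h : C ∈ Γ) : entails Γ C :=
  fun _ hσ => hσ C h

lemma entails.mono_LF_take {Φ : Set Clause} {π : List MStep} {p n : ℕ} {C : Clause}
    (h : entails (Φ ∪ LF (π.take p)) C) (hpn : p ≤ n) : entails (Φ ∪ LF (π.take n)) C :=
  h.mono (Set.union_subset_union_right Φ fun _ hc => (List.take_prefix_take_left hpn).subset hc)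

def addedTo (π : List MStep) (idx : ModIdx) : Set Clause :=
  {c | ∃ st ∈ π, st.addsTo idx c}

lemma mactive_subset_addedTo (π : List MStep) (idx : ModIdx) :
    mactive π idx ⊆ addedTo π idx := by
  rintro c ⟨i, hi, hadd, -⟩
  exact ⟨_, List.getElem_mem hi, hadd⟩

section MainModule

variable {π : List MStep} {Φm : Set Clause}

lemma entails_of_step_addsTo_main (hval : validModular π) (hm : allasserted π .m ⊆ Φm)
    {n : ℕ} (hn : n < π.length)
    (ih : ∀ c ∈ addedTo (π.take n) .m, entails (Φm ∪ LF (π.take n)) c)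
    {c : Clause} (hadd : π[n].addsTo .m c) :
    entails (Φm ∪ LF (π.take (n + 1))) c := by
  have hmem : π[n] ∈ π.take (n + 1) := List.mem_take_iff_getElem.2 ⟨n, by simp [hn], rfl⟩
  have of_RUP_main (h : RUP (mactive (π.take n) .m) c) :
      entails (Φm ∪ LF (π.take (n + 1))) c :=
    h.entails.trans fun D hD => (ih D (mactive_subset_addedTo _ _ hD)).mono_LF_take n.le_succ
  rcases hstep : π[n] with ⟨idx, c'⟩ | ⟨idx, c'⟩ | ⟨src, idx, c'⟩ | ⟨idx, c'⟩ <;>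
    rw [hstep] at hadd hmem
  · obtain ⟨rfl, rfl⟩ := hadd
    exact entails_of_mem (.inl (hm (List.mem_of_mem_take hmem)))
  · obtain ⟨rfl, rfl⟩ := hadd
    exact of_RUP_main (hval.1 n hn _ _ hstep)
  · obtain ⟨rfl, rfl⟩ := hadd
    cases src with
    | s => exact entails_of_mem (.inr hmem)
    | m => exact of_RUP_main (hval.2.1 n hn _ _ _ hstep)
  · exact hadd.elim

lemma entails_of_mem_addedTo_take_main (hval : validModular π) (hm : allasserted π .m ⊆ Φm) :
    ∀ n, ∀ c ∈ addedTo (π.take n) .m, entails (Φm ∪ LF (π.take n)) c := by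
  intro n
  induction n with
  | zero => simp [addedTo]
  | succ n ih =>
    rintro c ⟨st, hst, hadd⟩
    rw [List.take_add_one, List.mem_append] at hst
    rcases hst with hst | hst
    · exact (ih c ⟨st, hst, hadd⟩).mono_LF_take n.le_succ
    · obtain ⟨hn, rfl⟩ : ∃ hn : n < π.length, π[n] = st := by
        simpa [List.getElem?_eq_some_iff] using hst
      exact entails_of_step_addsTo_main hval hm hn ih hadd

end MainModule

theorem forward_entail_backward_general (π : List MStep) (Φm : Set Clause)
    (hval : validModular π)
    (hm : allasserted π ModIdx.m ⊆ Φm) :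
    ∀ cls ∈ LF π, ∀ i, firstCpF π cls i →
      ∀ b ∈ LB (π.take i), entails (Φm ∪ LF (π.take i)) b := by
  intro _ _ i _ b hb
  obtain ⟨j, hj, hstep⟩ := List.mem_take_iff_getElem.1 hb
  have hji : j ≤ i := (lt_min_iff.1 hj).1.le
  refine (hval.2.1 j _ _ _ _ hstep).entails.trans fun D hD => ?_
  exact (entails_of_mem_addedTo_take_main hval hm j D
    (mactive_subset_addedTo _ _ hD)).mono_LF_take hji

/-- for every forward clause `cls ∈ L_F(π)`, the main module's
clauses `Φm` together with the forward clauses copied before `cls` entail all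
backward clauses copied before `cls`. -/
theorem forward_entail_backward (π : List MStep) (Φs Φm : Set Clause)
    (hval : validModular π) (hnd : noDel π)
    (hs : allasserted π ModIdx.s ⊆ Φs) (hm : allasserted π ModIdx.m ⊆ Φm) :
    ∀ cls ∈ LF π, ∀ i, firstCpF π cls i →
      ∀ b ∈ LB (π.take i), entails (Φm ∪ LF (π.take i)) b :=
  forward_entail_backward_general π Φm hval hm
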